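/- Let Ψ : ℝ⁴ → ℂ⁴ be differentiable and satisfy the ε-deformed Heisenberg nonlinear spinor equation i γ^μ ∂_μ Ψ = 2s ( A + i ε B γ₅ ) Ψ, where s, ε are real constants and A := Ψ̄Ψ, B := i Ψ̄γ₅Ψ. Then the vector current J^μ := Ψ̄γ^μΨ is conserved for every value of ε: ∂_μ J^μ = 0; while the axial current I^μ := Ψ̄γ^μγ₅Ψ satisfies ∂_μ I^μ = 4 s (1 − ε) A B. In particular, the axial current is conserved precisely for the Heisenberg choice ε = 1. -/

import Mathlib

open scoped BigOperators
open Matrix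

noncomputable section

/-- The Dirac matrices γ⁰, γ¹, γ², γ³ in the standard Dirac representation. -/
def γm : Fin 4 → Matrix (Fin 4) (Fin 4) ℂ :=
  ![!![1, 0, 0, 0; 0, 1, 0, 0; 0, 0, -1, 0; 0, 0, 0, -1],
    !![0, 0, 0, 1; 0, 0, 1, 0; 0, -1, 0, 0; -1, 0, 0, 0],
    !![0, 0, 0, -Complex.I; 0, 0, Complex.I, 0; 0, Complex.I, 0, 0; -Complex.I, 0, 0, 0],
    !![0, 0, 1, 0; 0, 0, 0, -1; -1, 0, 0, 0; 0, 1, 0, 0]]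

/-- γ₅ := i γ⁰γ¹γ²γ³. -/
def γ5 : Matrix (Fin 4) (Fin 4) ℂ := Complex.I • (γm 0 * γm 1 * γm 2 * γm 3)

/-- The Minkowski metric diag(1,-1,-1,-1) with complex entries. -/
def ηc (μ ν : Fin 4) : ℂ := if μ = ν then (if μ = 0 then 1 else -1) else 0

/-- The Dirac bilinear Ψ̄ Q Ψ, with Ψ̄ := Ψ†γ⁰. -/
def bil (Q : Matrix (Fin 4) (Fin 4) ℂ) (Ψ : Fin 4 → ℂ) : ℂ :=
  dotProduct (Matrix.vecMul (star Ψ) (γm 0)) (Q.mulVec Ψ)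

/-- Partial derivative ∂_μ of a complex-valued function on ℝ⁴ (Cartesian coordinates). -/
def pdc (μ : Fin 4) (f : (Fin 4 → ℝ) → ℂ) (x : Fin 4 → ℝ) : ℂ :=
  fderiv ℝ f x (Pi.single μ 1)

/-!
For Γ^μ = γ^μ or γ^μγ₅ the matrix γ⁰Γ^μ is Hermitian, so the divergence of the current Ψ̄Γ^μΨ
is w + w̄ with w = Ψ̄ Σ_μ Γ^μ ∂_μΨ. The equation gives Σ_μ γ^μ ∂_μΨ = −2is(A + iεBγ₅)Ψ, and
γ^μγ₅ = −γ₅γ^μ reduces the axial sum to it. Then w is a polynomial in the real bilinears A = Ψ̄Ψ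
and B = iΨ̄γ₅Ψ: w = −2is(A² + εB²) is imaginary for the vector current, while w = 2s(1 − ε)AB is
real for the axial one.
-/

section Sesquilinear

variable {n : Type*} [Fintype n]

theorem star_star_dotProduct_mulVec {α : Type*} [CommSemiring α] [StarRing α]
    (u w : n → α) (H : Matrix n n α) :
    star (star u ⬝ᵥ H *ᵥ w) = star w ⬝ᵥ Hᴴ *ᵥ u := by
  rw [star_dotProduct, star_mulVec, dotProduct_mulVec, star_star]

variable {E : Type*} [NormedAddCommGroup E] [NormedSpace ℝ E] {Ψ : E → n → ℂ} {x : E}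

theorem fderiv_star_dotProduct_mulVec_apply (M : Matrix n n ℂ) (hΨ : DifferentiableAt ℝ Ψ x)
    (v : E) :
    fderiv ℝ (fun y => star (Ψ y) ⬝ᵥ M *ᵥ Ψ y) x v
      = star (fderiv ℝ Ψ x v) ⬝ᵥ M *ᵥ Ψ x + star (Ψ x) ⬝ᵥ M *ᵥ fderiv ℝ Ψ x v := by
  have hcoord := hasFDerivAt_pi'.1 hΨ.hasFDerivAt
  have hexpand : (fun y => star (Ψ y) ⬝ᵥ M *ᵥ Ψ y)
      = fun y => ∑ i, ∑ j, star (Ψ y i) * (M i j * Ψ y j) := by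
    funext y
    simp [dotProduct, mulVec, Finset.mul_sum]
  have hsum := HasFDerivAt.fun_sum (u := Finset.univ) fun i _ =>
    HasFDerivAt.fun_sum (u := Finset.univ) fun j _ =>
      (hcoord i).star.fun_mul ((hcoord j).const_mul (M i j))
  rw [hexpand, hsum.fderiv]
  simp [dotProduct, mulVec, Finset.mul_sum, ← Finset.sum_add_distrib]
  exact Finset.sum_congr rfl fun i _ => Finset.sum_congr rfl fun j _ => by ring

theorem sum_fderiv_star_dotProduct_mulVec {ι : Type*} [Fintype ι] {H : ι → Matrix n n ℂ}
    (hH : ∀ μ, (H μ).IsHermitian) (hΨ : DifferentiableAt ℝ Ψ x) (v : ι → E) :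
    ∑ μ, fderiv ℝ (fun y => star (Ψ y) ⬝ᵥ H μ *ᵥ Ψ y) x (v μ)
      = (∑ μ, star (Ψ x) ⬝ᵥ H μ *ᵥ fderiv ℝ Ψ x (v μ))
        + star (∑ μ, star (Ψ x) ⬝ᵥ H μ *ᵥ fderiv ℝ Ψ x (v μ)) := by
  rw [star_sum, ← Finset.sum_add_distrib]
  refine Finset.sum_congr rfl fun μ _ => ?_
  rw [fderiv_star_dotProduct_mulVec_apply _ hΨ, star_star_dotProduct_mulVec, (hH μ).eq, add_comm]

end Sesquilinear

section GammaMatrices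

theorem γ5_eq : γ5 = !![0, 0, 1, 0; 0, 0, 0, 1; 1, 0, 0, 0; 0, 1, 0, 0] := by
  ext i j
  fin_cases i <;> fin_cases j <;> simp [γ5, γm]

theorem γ0_mul_γ0 : γm 0 * γm 0 = 1 := by
  ext i j
  fin_cases i <;> fin_cases j <;> simp [γm, mul_apply, Fin.sum_univ_four]

theorem conjTranspose_γm (μ : Fin 4) : (γm μ)ᴴ = γm 0 * γm μ * γm 0 := by
  ext i j
  fin_cases μ <;> fin_cases i <;> fin_cases j <;> simp [γm, mul_apply, Fin.sum_univ_four]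

theorem conjTranspose_γ5 : γ5ᴴ = γ5 := by
  rw [γ5_eq]
  ext i j
  fin_cases i <;> fin_cases j <;> simp

theorem γ5_mul_γ5 : γ5 * γ5 = 1 := by
  rw [γ5_eq]
  ext i j
  fin_cases i <;> fin_cases j <;> simp [mul_apply, Fin.sum_univ_four]

theorem γm_mul_γ5 (μ : Fin 4) : γm μ * γ5 = -(γ5 * γm μ) := by
  rw [γ5_eq]
  ext i j
  fin_cases μ <;> fin_cases i <;> fin_cases j <;> simp [γm, mul_apply, Fin.sum_univ_four]

theorem γ5_mul_γm (μ : Fin 4) : γ5 * γm μ = -(γm μ * γ5) := by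
  rw [γm_mul_γ5, neg_neg]

theorem conjTranspose_γ0 : (γm 0)ᴴ = γm 0 := by
  rw [conjTranspose_γm, γ0_mul_γ0, Matrix.one_mul]

theorem conjTranspose_γ0_mul_γ5 : (γm 0 * γ5)ᴴ = -(γm 0 * γ5) := by
  rw [conjTranspose_mul, conjTranspose_γ5, conjTranspose_γ0, γ5_mul_γm]

theorem isHermitian_γ0_mul_γm (μ : Fin 4) : (γm 0 * γm μ).IsHermitian := by
  rw [IsHermitian, conjTranspose_mul, conjTranspose_γm, conjTranspose_γ0, Matrix.mul_assoc,
    γ0_mul_γ0, Matrix.mul_one]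

theorem isHermitian_γ0_mul_γm_mul_γ5 (μ : Fin 4) : (γm 0 * (γm μ * γ5)).IsHermitian := by
  rw [IsHermitian, conjTranspose_mul]
  calc (γm μ * γ5)ᴴ * (γm 0)ᴴ = γ5 * γm 0 * γm μ := by
        rw [conjTranspose_mul, conjTranspose_γ5, conjTranspose_γm, conjTranspose_γ0]
        simp only [Matrix.mul_assoc, γ0_mul_γ0, Matrix.mul_one]
    _ = γm 0 * (γm μ * γ5) := by
        rw [γ5_mul_γm, neg_mul, Matrix.mul_assoc, γm_mul_γ5, Matrix.mul_neg]

theorem γ5_mulVec_γ5_mulVec (ψ : Fin 4 → ℂ) : γ5 *ᵥ γ5 *ᵥ ψ = ψ := by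
  rw [mulVec_mulVec, γ5_mul_γ5, one_mulVec]

theorem sum_γm_mul_γ5_mulVec (D : Fin 4 → Fin 4 → ℂ) :
    ∑ μ, (γm μ * γ5) *ᵥ D μ = -(γ5 *ᵥ ∑ μ, γm μ *ᵥ D μ) := by
  simp only [γm_mul_γ5, neg_mulVec, ← mulVec_mulVec, Finset.sum_neg_distrib, mulVec_sum]

end GammaMatrices

section Bilinears

theorem bil_eq (Q : Matrix (Fin 4) (Fin 4) ℂ) (ψ : Fin 4 → ℂ) :
    bil Q ψ = star ψ ⬝ᵥ (γm 0 * Q) *ᵥ ψ := by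
  rw [bil, ← mulVec_mulVec, ← dotProduct_mulVec]

theorem dotProduct_γ0_mulVec_mulVec (Q : Matrix (Fin 4) (Fin 4) ℂ) (ψ : Fin 4 → ℂ) :
    star ψ ⬝ᵥ γm 0 *ᵥ Q *ᵥ ψ = bil Q ψ := by
  rw [bil_eq, mulVec_mulVec]

theorem dotProduct_γ0_mulVec (ψ : Fin 4 → ℂ) : star ψ ⬝ᵥ γm 0 *ᵥ ψ = bil 1 ψ := by
  rw [bil_eq, Matrix.mul_one]

theorem star_bil_one (ψ : Fin 4 → ℂ) : star (bil 1 ψ) = bil 1 ψ := by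
  rw [bil_eq, star_star_dotProduct_mulVec, Matrix.mul_one, conjTranspose_γ0]

theorem star_bil_γ5 (ψ : Fin 4 → ℂ) : star (bil γ5 ψ) = -bil γ5 ψ := by
  rw [bil_eq, star_star_dotProduct_mulVec, conjTranspose_γ0_mul_γ5, neg_mulVec, dotProduct_neg]

variable {Ψ : (Fin 4 → ℝ) → Fin 4 → ℂ} {x : Fin 4 → ℝ}

theorem sum_pdc_bil (hΨ : DifferentiableAt ℝ Ψ x) {Q : Fin 4 → Matrix (Fin 4) (Fin 4) ℂ}
    (hQ : ∀ μ, (γm 0 * Q μ).IsHermitian) :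
    ∑ μ, pdc μ (fun y => bil (Q μ) (Ψ y)) x
      = star (Ψ x) ⬝ᵥ γm 0 *ᵥ (∑ μ, Q μ *ᵥ fderiv ℝ Ψ x (Pi.single μ 1))
        + star (star (Ψ x) ⬝ᵥ γm 0 *ᵥ (∑ μ, Q μ *ᵥ fderiv ℝ Ψ x (Pi.single μ 1))) := by
  simp only [pdc, bil_eq]
  rw [sum_fderiv_star_dotProduct_mulVec hQ hΨ, mulVec_sum, dotProduct_sum]
  simp only [mulVec_mulVec]

theorem sum_γm_mulVec_fderiv_eq (hΨ : DifferentiableAt ℝ Ψ x) {R : Fin 4 → ℂ}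
    (hR : ∀ i, Complex.I * ∑ μ, ∑ j, γm μ i j * pdc μ (fun y => Ψ y j) x = R i) :
    ∑ μ, γm μ *ᵥ fderiv ℝ Ψ x (Pi.single μ 1) = -Complex.I • R := by
  have hI : Complex.I • ∑ μ, γm μ *ᵥ fderiv ℝ Ψ x (Pi.single μ 1) = R := by
    ext i
    simpa [pdc, fderiv_apply hΨ, mulVec, dotProduct, Finset.sum_apply] using hR i
  rw [← hI, smul_smul, neg_mul, Complex.I_mul_I, neg_neg, one_smul]

end Bilinears

/-- for solutions of the ε-deformed Heisenberg equation
iγ^μ∂_μΨ = 2s(A + iεBγ₅)Ψ, the vector current is conserved for every ε, while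
∂_μ I^μ = 4s(1−ε)AB (axial current conserved for the Heisenberg choice ε = 1). -/
theorem heisenberg_current_conservation
    (Ψ : (Fin 4 → ℝ) → Fin 4 → ℂ) (s ε : ℝ)
    (hdiff : ∀ i, Differentiable ℝ (fun x => Ψ x i))
    (A B : (Fin 4 → ℝ) → ℂ)
    (hA : ∀ x, A x = bil 1 (Ψ x))
    (hB : ∀ x, B x = Complex.I * bil γ5 (Ψ x))
    -- the ε-deformed Heisenberg nonlinear spinor equation, componentwise
    (heq : ∀ x i, Complex.I * ∑ μ, ∑ j, γm μ i j * pdc μ (fun y => Ψ y j) x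
      = 2 * (s : ℂ) * (A x * Ψ x i + Complex.I * (ε : ℂ) * B x * (γ5.mulVec (Ψ x)) i)) :
    -- ∂_μ J^μ = 0
    (∀ x, ∑ μ, pdc μ (fun y => bil (γm μ) (Ψ y)) x = 0) ∧
    -- ∂_μ I^μ = 4s(1−ε)AB
    (∀ x, ∑ μ, pdc μ (fun y => bil (γm μ * γ5) (Ψ y)) x
      = 4 * (s : ℂ) * (1 - (ε : ℂ)) * A x * B x) := by
  have hΨ : Differentiable ℝ Ψ := differentiable_pi.2 hdiff
  have hDirac : ∀ x, ∑ μ, γm μ *ᵥ fderiv ℝ Ψ x (Pi.single μ 1)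
      = -Complex.I • (2 * s : ℂ) • (A x • Ψ x + (Complex.I * ε * B x) • γ5 *ᵥ Ψ x) :=
    fun x => sum_γm_mulVec_fderiv_eq (hΨ x) fun i => (heq x i).trans (by simp)
  refine ⟨fun x => ?_, fun x => ?_⟩
  · rw [sum_pdc_bil (hΨ x) isHermitian_γ0_mul_γm, hDirac]
    simp only [mulVec_smul, mulVec_add, dotProduct_smul, dotProduct_add, smul_eq_mul,
      dotProduct_γ0_mulVec, dotProduct_γ0_mulVec_mulVec, hA, hB, star_mul', star_add, star_neg,
      star_bil_one, star_bil_γ5, Complex.star_def, Complex.conj_I, Complex.conj_ofReal, map_ofNat]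
    ring
  · rw [sum_pdc_bil (hΨ x) isHermitian_γ0_mul_γm_mul_γ5, sum_γm_mul_γ5_mulVec, hDirac]
    simp only [mulVec_neg, mulVec_smul, mulVec_add, γ5_mulVec_γ5_mulVec, dotProduct_neg,
      dotProduct_smul, dotProduct_add, smul_eq_mul,
      dotProduct_γ0_mulVec, dotProduct_γ0_mulVec_mulVec, hA, hB, star_mul', star_add, star_neg,
      star_bil_one, star_bil_γ5, Complex.star_def, Complex.conj_I, Complex.conj_ofReal, map_ofNat]
    linear_combination (4 * Complex.I * s * ε * bil 1 (Ψ x) * bil γ5 (Ψ x)) * Complex.I_mul_I
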